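/- arXiv:2307.06881 — 3 statements merged into one kernel-verified Lean document; each statement's English description precedes it below -/
import Mathlib

section
/- The ideal Fin² is Katětov below the Hindman ideal: there exists a function f : ℕ → ℕ×ℕ such that f⁻¹[C] belongs to the Hindman ideal for every C ∈ Fin². -/
/-- Set of finite nonempty sums of distinct elements of `B`. -/
def FS (B : Set ℕ) : Set ℕ :=
  {n | ∃ F : Finset ℕ, F.Nonempty ∧ ↑F ⊆ B ∧ F.sum id = n}

/-- `F` is a representation of `x` as a finite nonempty sum of distinct elements of `D`. -/
def Represents (D : Set ℕ) (F : Finset ℕ) (x : ℕ) : Prop :=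
  F.Nonempty ∧ ↑F ⊆ D ∧ F.sum id = x

/-- `D` is sparse: every element of `FS D` has a unique representation. -/
def Sparse (D : Set ℕ) : Prop :=
  ∀ x ∈ FS D, ∃! F : Finset ℕ, Represents D F x

/-- `D` is very sparse. -/
def VerySparse (D : Set ℕ) : Prop :=
  Sparse D ∧ ∀ x y F G, Represents D F x → Represents D G y →
    (F ∩ G).Nonempty → x + y ∉ FS D

/-- Membership in the Hindman ideal. -/
def InHindman (A : Set ℕ) : Prop :=
  ∀ B : Set ℕ, B.Infinite → ¬ FS B ⊆ A

/-- Membership in the ideal Fin² on ℕ × ℕ. -/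
def InFinSq (C : Set (ℕ × ℕ)) : Prop :=
  {n : ℕ | {k : ℕ | (n, k) ∈ C}.Infinite}.Finite

/-!
The witness is `x ↦ (v₂(x), x)`. Its preimage of a set `C ∈ Fin²` can only contain `FS B`, for
`B` infinite, if infinitely many valuations `n` are each attained by infinitely many elements
of `FS B`, since each such `n` then has an infinite section in `C`. This holds for every prime
`p`: given `N`, infinitely many elements of `B` share a residue `c` modulo `p ^ (N + 1)`. If
`c ≠ 0`, then `v_p(c) ≤ N`, and the sums of `p ^ (N - v_p(c))` of these elements all have
valuation exactly `N`. If `c = 0`, take `b₀` of minimal valuation among them: every other `b`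
has either `v_p(b) = v_p(b₀)` or `v_p(b₀ + b) = v_p(b₀)`, and `v_p(b₀) > N`.
-/

section FS

variable {B : Set ℕ}

lemma sum_mem_FS {F : Finset ℕ} (hF : F.Nonempty) (hFB : ↑F ⊆ B) : ∑ b ∈ F, b ∈ FS B :=
  ⟨F, hF, hFB, rfl⟩

lemma mem_FS_of_mem {b : ℕ} (hb : b ∈ B) : b ∈ FS B := by
  simpa using sum_mem_FS (Finset.singleton_nonempty b) (by simpa using hb)

lemma add_mem_FS {a b : ℕ} (ha : a ∈ B) (hb : b ∈ B) (hab : a ≠ b) : a + b ∈ FS B := by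
  simpa [Finset.sum_pair hab] using
    sum_mem_FS (Finset.insert_nonempty a {b}) (by simp [Set.insert_subset_iff, ha, hb])

lemma FS_mono {B' : Set ℕ} (h : B ⊆ B') : FS B ⊆ FS B' :=
  fun _ ⟨F, hF, hFB, hsum⟩ => ⟨F, hF, hFB.trans h, hsum⟩

lemma Set.Infinite.exists_infinite_mod_eq (hB : B.Infinite) {M : ℕ} (hM : 0 < M) :
    ∃ c < M, {b ∈ B | b % M = c}.Infinite := by
  by_contra! h
  refine hB (((Set.finite_Iio M).biUnion fun c hc => h c hc).subset fun b hb => ?_)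
  exact Set.mem_biUnion (Set.mem_Iio.mpr (Nat.mod_lt b hM)) ⟨hb, rfl⟩

lemma Set.Infinite.infinite_setOf_sum_card_eq (hB : B.Infinite) {k : ℕ} (hk : 0 < k) :
    {x | ∃ F : Finset ℕ, ↑F ⊆ B ∧ F.card = k ∧ ∑ b ∈ F, b = x}.Infinite := by
  classical
  obtain ⟨F₀, hF₀B, hF₀card⟩ := hB.exists_subset_card_eq (k - 1)
  refine ((hB.sdiff F₀.finite_toSet).image (add_right_injective (∑ b ∈ F₀, b)).injOn).mono ?_
  rintro _ ⟨b, ⟨hbB, hbF₀⟩, rfl⟩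
  refine ⟨insert b F₀, ?_, ?_, ?_⟩
  · simpa [Set.insert_subset_iff] using ⟨hbB, hF₀B⟩
  · rw [Finset.card_insert_of_notMem hbF₀, hF₀card]
    omega
  · rw [Finset.sum_insert hbF₀, add_comm]

end FS

section padicValNat

variable {p : ℕ} [Fact p.Prime]

lemma padicValNat_eq_of_dvd_of_not_dvd {x n : ℕ} (h₁ : p ^ n ∣ x) (h₂ : ¬p ^ (n + 1) ∣ x) :
    padicValNat p x = n := by
  have hx : x ≠ 0 := by rintro rfl; exact h₂ (dvd_zero _)
  rw [padicValNat_dvd_iff_le hx] at h₁ h₂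
  omega

lemma padicValNat_add_eq_left_of_lt {x y : ℕ} (hx : x ≠ 0)
    (h : padicValNat p x < padicValNat p y) : padicValNat p (x + y) = padicValNat p x := by
  have hy : p ^ (padicValNat p x + 1) ∣ y := (padicValNat_dvd_iff _ y).mpr (Or.inr h)
  apply padicValNat_eq_of_dvd_of_not_dvd
  · exact dvd_add pow_padicValNat_dvd ((pow_dvd_pow p (Nat.le_succ _)).trans hy)
  · exact fun hxy => pow_succ_padicValNat_not_dvd hx ((Nat.dvd_add_left hy).mp hxy)

lemma padicValNat_eq_of_modEq {x y : ℕ} (hy : y ≠ 0)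
    (h : x ≡ y [MOD p ^ (padicValNat p y + 1)]) : padicValNat p x = padicValNat p y :=
  padicValNat_eq_of_dvd_of_not_dvd
    ((h.dvd_iff (pow_dvd_pow p (Nat.le_succ _))).mpr pow_padicValNat_dvd)
    (fun hx => pow_succ_padicValNat_not_dvd hy ((h.dvd_iff dvd_rfl).mp hx))

variable {B : Set ℕ}

theorem Set.Infinite.exists_infinite_FS_padicValNat_eq (hB : B.Infinite) (h0 : 0 ∉ B) :
    ∃ b ∈ B, {x ∈ FS B | padicValNat p x = padicValNat p b}.Infinite := by
  set b₀ := Function.argminOn (padicValNat p) B hB.nonempty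
  have hb₀B : b₀ ∈ B := Function.argminOn_mem _ _ _
  have hsplit : B ⊆ {b ∈ B | padicValNat p b = padicValNat p b₀} ∪
      {b ∈ B | padicValNat p b₀ < padicValNat p b} := fun b hb =>
    (Function.argminOn_le (padicValNat p) B hb).eq_or_lt.imp (fun h => ⟨hb, h.symm⟩) (⟨hb, ·⟩)
  refine ⟨b₀, hb₀B, ?_⟩
  rcases Set.infinite_union.mp (hB.mono hsplit) with heq | hlt
  · refine heq.mono ?_
    rintro b ⟨hb, hv⟩
    exact ⟨mem_FS_of_mem hb, hv⟩
  · refine (hlt.image (add_right_injective b₀).injOn).mono ?_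
    rintro _ ⟨b, ⟨hb, hv⟩, rfl⟩
    exact ⟨add_mem_FS hb₀B hb (fun h => hv.ne (congrArg _ h)),
      padicValNat_add_eq_left_of_lt (fun h => h0 (h ▸ hb₀B)) hv⟩

theorem Set.Infinite.exists_infinite_FS_padicValNat_eq_of_le (hB : B.Infinite) (N : ℕ) :
    ∃ n, N ≤ n ∧ {x ∈ FS B | padicValNat p x = n}.Infinite := by
  have hp := (Fact.out : p.Prime).pos
  obtain ⟨c, hcM, hc⟩ := hB.exists_infinite_mod_eq (pow_pos hp (N + 1))
  have hcB : {b ∈ B | b % p ^ (N + 1) = c} ⊆ B := fun b hb => hb.1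
  rcases eq_or_ne c 0 with rfl | hc0
  · obtain ⟨b, ⟨⟨-, hb⟩, hb0⟩, hinf⟩ :=
      (hc.sdiff (Set.finite_singleton 0)).exists_infinite_FS_padicValNat_eq (p := p) (by simp)
    have hNb : N + 1 ≤ padicValNat p b :=
      (padicValNat_dvd_iff_le hb0).mp (Nat.dvd_of_mod_eq_zero hb)
    exact ⟨_, by omega, hinf.mono fun x hx => ⟨FS_mono (Set.sdiff_subset.trans hcB) hx.1, hx.2⟩⟩
  · have hcN : padicValNat p c ≤ N :=
      (padicValNat_le_nat_log c).trans (Nat.lt_succ_iff.mp (Nat.log_lt_of_lt_pow hc0 hcM))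
    set k := p ^ (N - padicValNat p c)
    have hk : 0 < k := pow_pos hp _
    have hkc : padicValNat p (k * c) = N := by
      rw [padicValNat.mul hk.ne' hc0, padicValNat.prime_pow]
      omega
    refine ⟨N, le_rfl, (hc.infinite_setOf_sum_card_eq hk).mono ?_⟩
    rintro _ ⟨F, hF, hFcard, rfl⟩
    refine ⟨sum_mem_FS (Finset.card_pos.mp (hFcard ▸ hk)) (hF.trans hcB), ?_⟩
    have hsum : ∑ b ∈ F, b ≡ k * c [MOD p ^ (padicValNat p (k * c) + 1)] := by
      rw [hkc]
      calc ∑ b ∈ F, b ≡ ∑ _b ∈ F, c [MOD p ^ (N + 1)] :=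
            Nat.ModEq.sum fun b hb => (hF hb).2.trans (Nat.mod_eq_of_lt hcM).symm
        _ = k * c := by simp [hFcard]
    rw [padicValNat_eq_of_modEq (mul_ne_zero hk.ne' hc0) hsum, hkc]

theorem Set.Infinite.infinite_setOf_infinite_FS_padicValNat_eq (hB : B.Infinite) :
    {n | {x ∈ FS B | padicValNat p x = n}.Infinite}.Infinite :=
  Set.infinite_of_forall_exists_gt fun N =>
    let ⟨n, hn, hinf⟩ := hB.exists_infinite_FS_padicValNat_eq_of_le (N + 1)
    ⟨n, hinf, hn⟩

end padicValNat

theorem finsq_katetov_below_hindman :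
    ∃ f : ℕ → ℕ × ℕ, ∀ C : Set (ℕ × ℕ), InFinSq C → InHindman (f ⁻¹' C) := by
  refine ⟨fun x => (padicValNat 2 x, x), fun C hC B hB hFS => ?_⟩
  refine hB.infinite_setOf_infinite_FS_padicValNat_eq (p := 2) (hC.subset fun n hn => hn.mono ?_)
  rintro x ⟨hx, rfl⟩
  exact hFS hx
end

section
/- Canonical Ramsey reduction to the summable ideal, constant-on-min case: if T ⊆ ℕ is infinite and φ : [ℕ]² → ℕ satisfies that for all x, y ∈ [T]², φ(x) = φ(y) if and only if min x = min y, then there is an infinite H ⊆ T with ∑_{y ∈ φ[[H]²]} 1/(y+1) < ∞. -/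
/-- The set of unordered pairs of distinct elements of `H`. -/
def pairsOf (H : Set ℕ) : Set (Sym2 ℕ) :=
  {p | ∃ a b, a ≠ b ∧ a ∈ H ∧ b ∈ H ∧ p = Sym2.mk a b}

/-- Membership in the Ramsey ideal. -/
def InRamsey (A : Set (Sym2 ℕ)) : Prop :=
  ∀ H : Set ℕ, H.Infinite → ¬ pairsOf H ⊆ A

/-- Membership in the summable ideal. -/
def InSummable (A : Set ℕ) : Prop :=
  Summable (fun n : A => (1 : ℝ) / ((n : ℕ) + 1))

/-!
On `[T]²` the colouring is `φ {a < b} = f a` for a map `f` injective on `T`, so `f '' T` is an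
infinite set of naturals. Any infinite set of naturals has an infinite subset with summable
reciprocals (take its `2 ^ k`-th elements, which are at least `2 ^ k`); pulling such a subset back
along `f` gives `H`, and every colour of `[H]²` is `f` of an element of `H`.
-/
theorem InSummable.mono {A B : Set ℕ} (hAB : A ⊆ B) (hB : InSummable B) : InSummable A := by
  unfold InSummable at hB ⊢
  exact hB.comp_injective (i := Set.inclusion hAB) (Set.inclusion_injective hAB)

theorem inSummable_range_of_two_pow_le {a : ℕ → ℕ} (ha : Function.Injective a)
    (h : ∀ k, 2 ^ k ≤ a k) : InSummable (Set.range a) := by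
  unfold InSummable
  rw [← (Equiv.ofInjective a ha).summable_iff]
  refine summable_geometric_two.of_nonneg_of_le
    (fun k => by dsimp only [Function.comp_apply]; positivity) fun k => ?_
  have hk : (2 : ℝ) ^ k ≤ a k + 1 := by exact_mod_cast (h k).trans (Nat.le_succ _)
  simpa [one_div_pow] using one_div_le_one_div_of_le (by positivity) hk

theorem Set.Infinite.exists_subset_inSummable {S : Set ℕ} (hS : S.Infinite) :
    ∃ S' ⊆ S, S'.Infinite ∧ InSummable S' := by
  set a : ℕ → ℕ := fun k => Nat.nth (· ∈ S) (2 ^ k)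
  have ha : StrictMono a := (Nat.nth_strictMono hS).comp (pow_right_strictMono₀ one_lt_two)
  refine ⟨Set.range a, Set.range_subset_iff.2 fun k => Nat.nth_mem_of_infinite hS _,
    Set.infinite_range_of_injective ha.injective,
    inSummable_range_of_two_pow_le ha.injective fun k => (Nat.nth_strictMono hS).id_le _⟩

theorem exists_injOn_factor_through_min {T : Set ℕ} (hT : T.Infinite) {φ : Sym2 ℕ → ℕ}
    (hmin : ∀ a b c d : ℕ, a < b → c < d → a ∈ T → b ∈ T → c ∈ T → d ∈ T →
      (φ (Sym2.mk a b) = φ (Sym2.mk c d) ↔ a = c)) :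
    ∃ f : ℕ → ℕ, T.InjOn f ∧ ∀ a b, a < b → a ∈ T → b ∈ T → φ (Sym2.mk a b) = f a := by
  choose next hnextT hlt using fun t => hT.exists_gt t
  have hf : ∀ a b, a < b → a ∈ T → b ∈ T → φ (Sym2.mk a b) = φ (Sym2.mk a (next a)) :=
    fun a b hab ha hb => (hmin a b a _ hab (hlt a) ha hb ha (hnextT a)).2 rfl
  refine ⟨fun t => φ (Sym2.mk t (next t)), fun a ha c hc hac => ?_, hf⟩
  obtain ⟨b, hb, hab⟩ := hT.exists_gt (max a c)
  rw [max_lt_iff] at hab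
  refine (hmin a b c b hab.1 hab.2 ha hb hc hb).1 ?_
  rw [hf a b hab.1 ha hb, hf c b hab.2 hc hb]
  exact hac

theorem image_pairsOf_subset_image {T H : Set ℕ} {φ : Sym2 ℕ → ℕ} {f : ℕ → ℕ} (hHT : H ⊆ T)
    (hf : ∀ a b, a < b → a ∈ T → b ∈ T → φ (Sym2.mk a b) = f a) :
    φ '' pairsOf H ⊆ f '' H := by
  rintro _ ⟨_, ⟨a, b, hab, ha, hb, rfl⟩, rfl⟩
  rcases hab.lt_or_gt with hab | hba
  · exact ⟨a, ha, (hf a b hab (hHT ha) (hHT hb)).symm⟩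
  · exact ⟨b, hb, by rw [Sym2.eq_swap, hf b a hba (hHT hb) (hHT ha)]⟩

theorem canonical_ramsey_min_case (T : Set ℕ) (hT : T.Infinite)
    (φ : Sym2 ℕ → ℕ)
    (hmin : ∀ a b c d : ℕ, a < b → c < d → a ∈ T → b ∈ T → c ∈ T → d ∈ T →
      (φ (Sym2.mk a b) = φ (Sym2.mk c d) ↔ a = c)) :
    ∃ H : Set ℕ, H ⊆ T ∧ H.Infinite ∧ InSummable (φ '' pairsOf H) := by
  obtain ⟨f, hfinj, hf⟩ := exists_injOn_factor_through_min hT hmin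
  obtain ⟨S, hST, hSinf, hS⟩ := (hT.image hfinj).exists_subset_inSummable
  set H := T ∩ f ⁻¹' S
  have hfH : f '' H = S := by
    rw [Set.image_inter_preimage]
    exact Set.inter_eq_right.2 hST
  refine ⟨H, Set.inter_subset_left, Set.Infinite.of_image f (hfH ▸ hSinf), ?_⟩
  exact hS.mono (hfH ▸ image_pairsOf_subset_image Set.inter_subset_left hf)
end

section
/- The Hindman ideal is not Katětov below the Ramsey ideal: there is no function f : [ℕ]² → ℕ such that f⁻¹[A] ∈ R for every A in the Hindman ideal. -/
/-!
Given `f`, write `ψ a b = f s(a, b)` for `a < b`. It suffices to find an infinite `H` such that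
the values of `ψ` on pairs from `H` form a set in the Hindman ideal, since the preimage of that
set contains `[H]²`. By Ramsey's theorem for 6-tuples we may pass to a subsequence on which the
truth of `ψ π₁ + ψ π₂ = ψ π₃` and of `ψ π₁ = ψ π₂` for pairs `πᵢ` depends only on the relative
order of their endpoints.

If `ψ a b = ψ a c` (or `ψ a c = ψ b c`) for `a < b < c`, then `ψ` depends on one coordinate
only, and a constant fibre or a lacunary sequence of values does the job. Otherwise `ψ` is
injective in each coordinate. Then in a relation `ψ π₁ + ψ π₂ = ψ π₃` no endpoint can be private
to one pair (moving it would change exactly one term), so the pairs are the sides of a triangle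
`p < q < r`, and four points rule out every shape but `ψ p q + ψ q r = ψ p r`. So for
`x < y < z` in `B`, the pairs representing `x`, `y`, `z` would be pairwise adjacent, which is
impossible.
-/

theorem mem_FS_of_mem_s17 {B : Set ℕ} {x : ℕ} (hx : x ∈ B) : x ∈ FS B :=
  ⟨{x}, Finset.singleton_nonempty x, by simpa using hx, by simp⟩

theorem add_mem_FS_s17 {B : Set ℕ} {x y : ℕ} (hx : x ∈ B) (hy : y ∈ B) (hxy : x ≠ y) :
    x + y ∈ FS B :=
  ⟨{x, y}, Finset.insert_nonempty x {y}, by simp [Set.insert_subset_iff, hx, hy],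
    Finset.sum_pair hxy⟩

theorem InHindman.mono {A A' : Set ℕ} (h : InHindman A') (hA : A ⊆ A') : InHindman A :=
  fun B hB hsub => h B hB (hsub.trans hA)

theorem inHindman_of_subsingleton {A : Set ℕ} (hA : A.Subsingleton) : InHindman A := by
  intro B hB hsub
  obtain ⟨x, hx, y, hy, hxy⟩ := hB.nontrivial
  exact hxy (hA (hsub (mem_FS_of_mem_s17 hx)) (hsub (mem_FS_of_mem_s17 hy)))

theorem inHindman_of_lacunary {A : Set ℕ} (hA : ∀ x ∈ A, ∀ y ∈ A, x < y → 2 * x < y) :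
    InHindman A := by
  intro B hB hsub
  obtain ⟨x, hx, hx0⟩ := hB.exists_gt 0
  obtain ⟨y, hy, hxy⟩ := hB.exists_gt x
  have := hA y (hsub (mem_FS_of_mem_s17 hy)) (x + y) (hsub (add_mem_FS_s17 hx hy hxy.ne)) (by omega)
  omega

theorem exists_infinite_inHindman_image (g : ℕ → ℕ) :
    ∃ S : Set ℕ, S.Infinite ∧ InHindman (g '' S) := by
  by_cases hfib : ∃ v, (g ⁻¹' {v}).Infinite
  · obtain ⟨v, hv⟩ := hfib
    refine ⟨_, hv, inHindman_of_subsingleton ?_⟩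
    rw [Set.image_preimage_eq_inter_range]
    exact Set.subsingleton_singleton.anti Set.inter_subset_left
  simp only [not_exists, Set.not_infinite] at hfib
  have hg : Filter.Tendsto g Filter.atTop Filter.atTop := by
    simpa only [Nat.cofinite_eq_atTop] using
      Filter.Tendsto.cofinite_of_finite_preimage_singleton fun v => (hfib v).to_subtype
  obtain ⟨s, -, hs⟩ := exists_seq_of_forall_finset_exists (fun _ => True)
    (fun x y => x < y ∧ 2 * g x < g y) fun F _ => by
      obtain ⟨y, hgy, hy⟩ := ((hg.eventually_gt_atTop (2 * F.sup g)).and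
        (Filter.eventually_gt_atTop (F.sup id))).exists
      exact ⟨y, trivial, fun x hx =>
        ⟨(Finset.le_sup (f := id) hx).trans_lt hy,
          (Nat.mul_le_mul_left 2 (Finset.le_sup hx)).trans_lt hgy⟩⟩
  have hgs : StrictMono (g ∘ s) := fun m n h => by
    have := (hs m n h).2
    simp only [Function.comp_apply]
    omega
  have hs_mono : StrictMono s := fun m n h => (hs m n h).1
  refine ⟨Set.range s, Set.infinite_range_of_injective hs_mono.injective, ?_⟩
  rw [← Set.range_comp]
  refine inHindman_of_lacunary ?_
  rintro _ ⟨m, rfl⟩ _ ⟨n, rfl⟩ hlt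
  exact (hs m n (hgs.lt_iff_lt.1 hlt)).2

def HasInfiniteHomogeneous (γ : Type*) (r : ℕ) : Prop :=
  ∀ (c : (Fin r → ℕ) → γ) (S : Set ℕ), S.Infinite → ∃ T ⊆ S, T.Infinite ∧
    ∃ g, ∀ x : Fin r → ℕ, StrictMono x → (∀ i, x i ∈ T) → c x = g

theorem hasInfiniteHomogeneous_zero (γ : Type*) : HasInfiniteHomogeneous γ 0 :=
  fun c S hS => ⟨S, subset_rfl, hS, c Fin.elim0, fun x _ _ => congrArg c (Subsingleton.elim x _)⟩

theorem HasInfiniteHomogeneous.succ {γ : Type*} [Finite γ] {r : ℕ}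
    (ih : HasInfiniteHomogeneous γ r) : HasInfiniteHomogeneous γ (r + 1) := by
  intro c S hS
  have hstep : ∀ S : Set ℕ, S.Infinite → ∃ T ⊆ S, T.Infinite ∧ (∀ y ∈ T, sInf S < y) ∧
      ∃ g, ∀ x : Fin r → ℕ, StrictMono x → (∀ i, x i ∈ T) → c (Fin.cons (sInf S) x) = g := by
    intro S hS
    obtain ⟨T, hTS, hT, g, hg⟩ :=
      ih (fun x => c (Fin.cons (sInf S) x)) _ (hS.sdiff (Set.finite_Iic (sInf S)))
    exact ⟨T, fun y hy => (hTS hy).1, hT, fun y hy => not_le.1 (hTS hy).2, g, hg⟩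
  have : Nonempty γ := ⟨c Fin.val⟩
  choose! next hsub hinf hgt g hg using hstep
  let chain : ℕ → Set ℕ := fun n => next^[n] S
  have hsucc : ∀ n, chain (n + 1) = next (chain n) := fun n => Function.iterate_succ_apply' _ _ _
  have hchain : ∀ n, (chain n).Infinite := fun n => by
    induction n with
    | zero => exact hS
    | succ n ihn => exact hsucc n ▸ hinf _ ihn
  have hanti : Antitone chain := antitone_nat_of_succ_le fun n => hsucc n ▸ hsub _ (hchain n)
  let a : ℕ → ℕ := fun n => sInf (chain n)
  have ha : ∀ n, a n ∈ chain n := fun n => Nat.sInf_mem (hchain n).nonempty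
  have hamono : StrictMono a :=
    strictMono_nat_of_lt_succ fun n => hgt _ (hchain n) _ (hsucc n ▸ ha (n + 1))
  obtain ⟨v, hv⟩ := Finite.exists_infinite_fiber fun n => g (chain n)
  refine ⟨a '' (fun n => g (chain n)) ⁻¹' {v}, ?_, (Set.infinite_coe_iff.1 hv).image
    hamono.injective.injOn, v, ?_⟩
  · rintro _ ⟨n, -, rfl⟩
    exact hanti (Nat.zero_le n) (ha n)
  intro x hx hxT
  obtain ⟨n, hn, hxn⟩ := hxT 0
  have htail : ∀ i, Fin.tail x i ∈ next (chain n) := by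
    intro i
    obtain ⟨m, -, hxm⟩ := hxT i.succ
    have hnm : n < m := hamono.lt_iff_lt.1 (hxn ▸ hxm ▸ hx (Fin.succ_pos i))
    rw [Fin.tail, ← hxm, ← hsucc]
    exact hanti hnm (ha m)
  rw [← Fin.cons_self_tail x, ← hxn]
  exact (hg _ (hchain n) _ (fun i j hij => hx (Fin.succ_lt_succ_iff.2 hij)) htail).trans hn

theorem hasInfiniteHomogeneous (γ : Type*) [Finite γ] (r : ℕ) : HasInfiniteHomogeneous γ r := by
  induction r with
  | zero => exact hasInfiniteHomogeneous_zero γ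
  | succ r ih => exact ih.succ

def OrderInvariant {γ : Type*} {n : ℕ} (c : (Fin n → ℕ) → γ) : Prop :=
  ∀ u v : Fin n → ℕ, (∀ i j, u i < u j ↔ v i < v j) → c u = c v

theorem OrderInvariant.comp_eq {γ : Type*} {n m : ℕ} {c : (Fin n → ℕ) → γ}
    (hc : OrderInvariant c) {x y : Fin m → ℕ} (hx : StrictMono x) (hy : StrictMono y)
    (ρ : Fin n → Fin m) : c (x ∘ ρ) = c (y ∘ ρ) :=
  hc _ _ fun _ _ => hx.lt_iff_lt.trans hy.lt_iff_lt.symm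

open Finset in
def tupleRank {n : ℕ} (u : Fin n → ℕ) (i : Fin n) : Fin n :=
  ⟨#{j | u j < u i}, by
    simpa using Finset.card_lt_univ_of_notMem (s := {j | u j < u i}) (x := i) (by simp)⟩

theorem tupleRank_lt_tupleRank {n : ℕ} {u : Fin n → ℕ} {i j : Fin n} (h : u i < u j) :
    tupleRank u i < tupleRank u j := by
  refine Fin.mk_lt_mk.2 (Finset.card_lt_card ⟨fun k => ?_, fun hsub => ?_⟩)
  · simp only [Finset.mem_filter, Finset.mem_univ, true_and]
    exact fun hk => hk.trans h
  · have hii := hsub (Finset.mem_filter.2 ⟨Finset.mem_univ i, h⟩)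
    simp at hii

theorem tupleRank_congr {n : ℕ} {u v : Fin n → ℕ} (h : ∀ i j, u i < u j ↔ v i < v j) :
    tupleRank u = tupleRank v :=
  funext fun i => Fin.ext (by simp only [tupleRank, h])

theorem exists_strictMono_comp_tupleRank {n : ℕ} (u : Fin n → ℕ) :
    ∃ x : Fin n → ℕ, StrictMono x ∧ ∀ i, x (tupleRank u i) = (n + 1) * u i := by
  classical
  -- the factor `n + 1` leaves room below each value for the ranks skipped by ties
  let x : Fin n → ℕ := fun r => ({i | tupleRank u i ≤ r} : Finset (Fin n)).sup
    fun i => (n + 1) * u i + (r - tupleRank u i : ℕ)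
  have hle : ∀ r i, tupleRank u i ≤ r → (n + 1) * u i + (r - tupleRank u i : ℕ) ≤ x r :=
    fun r i hi => Finset.le_sup (f := fun i => (n + 1) * u i + (r - tupleRank u i : ℕ))
      (by simpa using hi)
  refine ⟨x, fun r s hrs => ?_, fun i => le_antisymm (Finset.sup_le fun j hj => ?_) ?_⟩
  · obtain ⟨i₀, -, hi₀⟩ := Finset.exists_min_image Finset.univ u ⟨r, Finset.mem_univ r⟩
    have h₀ : (tupleRank u i₀ : ℕ) = 0 := by
      simp [tupleRank, not_lt.2 (hi₀ _ (Finset.mem_univ _))]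
    have hs := hle s i₀ (Fin.le_def.2 (by omega))
    refine (Finset.sup_lt_iff (by rw [bot_eq_zero']; simp only [h₀] at hs; omega)).2
      fun j hj => ?_
    simp only [Finset.mem_filter, Finset.mem_univ, true_and, Fin.le_def] at hj
    have := hle s j (Fin.le_def.2 (hj.trans hrs.le))
    have : (r : ℕ) < s := hrs
    omega
  · simp only [Finset.mem_filter, Finset.mem_univ, true_and] at hj
    have hji : u j ≤ u i := not_lt.1 fun h => (tupleRank_lt_tupleRank h).not_ge hj
    rcases hji.lt_or_eq with hlt | heq
    · have hi : (tupleRank u i : ℕ) < n := (tupleRank u i).isLt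
      have hij : (n + 1) * (u j + 1) ≤ (n + 1) * u i := Nat.mul_le_mul_left _ hlt
      rw [Nat.mul_succ] at hij
      omega
    · simp [heq, tupleRank]
  · simpa using hle _ i le_rfl

theorem exists_strictMono_orderInvariant {γ : Type*} [Finite γ] {n : ℕ}
    (c : (Fin n → ℕ) → γ) : ∃ e : ℕ → ℕ, StrictMono e ∧ OrderInvariant fun u => c (e ∘ u) := by
  obtain ⟨T, -, hT, g, hg⟩ := hasInfiniteHomogeneous _ n
    (fun x (τ : Fin n → Fin n) => c (x ∘ τ)) _ Set.infinite_univ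
  have he : StrictMono (Nat.nth (· ∈ T)) := Nat.nth_strictMono hT
  refine ⟨Nat.nth (· ∈ T) ∘ ((n + 1) * ·), he.comp (strictMono_mul_left_of_pos n.succ_pos),
    fun u v huv => ?_⟩
  have key : ∀ w : Fin n → ℕ, c ((Nat.nth (· ∈ T) ∘ ((n + 1) * ·)) ∘ w) = g (tupleRank w) := by
    intro w
    obtain ⟨x, hx, hxw⟩ := exists_strictMono_comp_tupleRank w
    have hcomp : (Nat.nth (· ∈ T) ∘ ((n + 1) * ·)) ∘ w = (Nat.nth (· ∈ T) ∘ x) ∘ tupleRank w :=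
      funext fun i => by simp [hxw]
    rw [hcomp]
    exact congrFun (hg _ (he.comp hx) fun i => Nat.nth_mem_of_infinite hT _) _
  simp only [key, tupleRank_congr huv]

theorem strictMono_vec_three {a b c : ℕ} (hab : a < b) (hbc : b < c) : StrictMono ![a, b, c] :=
  (strictMono_vecEmpty.vecCons hbc).vecCons hab

def SumRel (φ : ℕ → ℕ → ℕ) (u : Fin 6 → ℕ) : Prop :=
  φ (u 0) (u 1) + φ (u 2) (u 3) = φ (u 4) (u 5)

def pairValues (φ : ℕ → ℕ → ℕ) (S : Set ℕ) : Set ℕ :=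
  {x | ∃ a ∈ S, ∃ b ∈ S, a < b ∧ φ a b = x}

-- If every endpoint lies on two of the pairs, the pairs are the sides of a triangle; the last
-- four disjuncts are the triangles whose third pair is not the longest side.
theorem adjacent_or_triangle {a₁ b₁ a₂ b₂ a₃ b₃ : ℕ} (h₁ : a₁ < b₁) (h₂ : a₂ < b₂)
    (h₃ : a₃ < b₃) (h₂₃ : ¬(a₂ = a₃ ∧ b₂ = b₃))
    (hshared : ∀ i, ∃ j ≠ i, ![a₁, b₁, a₂, b₂, a₃, b₃] j = ![a₁, b₁, a₂, b₂, a₃, b₃] i) :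
    b₁ = a₂ ∨ b₂ = a₁ ∨ (a₁ = a₂ ∧ b₁ = a₃ ∧ b₂ = b₃) ∨ (a₁ = a₂ ∧ b₂ = a₃ ∧ b₁ = b₃) ∨
      (b₁ = b₂ ∧ a₁ = a₃ ∧ a₂ = b₃) ∨ (b₁ = b₂ ∧ a₂ = a₃ ∧ a₁ = b₃) := by
  have hA₁ := hshared 0
  have hB₁ := hshared 1
  have hA₂ := hshared 2
  have hB₂ := hshared 3
  have hA₃ := hshared 4
  have hB₃ := hshared 5
  simp only [Fin.exists_fin_succ, Fin.exists_fin_zero, Nat.succ_eq_add_one, Nat.reduceAdd,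
    Fin.isValue, ne_eq, not_true_eq_false, and_true, Fin.succ_zero_eq_one, one_ne_zero,
    not_false_eq_true, Matrix.cons_val_one, Matrix.cons_val_zero, true_and, Fin.succ_one_eq_two,
    Fin.reduceEq, Matrix.cons_val, Fin.reduceSucc, or_false, false_or, zero_ne_one, or_self]
    at hA₁ hB₁ hA₂ hB₂ hA₃ hB₃
  rcases hA₃ with rfl | rfl | rfl | rfl | h <;> rcases hB₃ with rfl | rfl | rfl | rfl | h' <;>
    rcases hA₁ with h'' | h'' | h'' | h'' | h'' <;> omega

section SemiInjective

variable {ψ : ℕ → ℕ → ℕ} (hsum : OrderInvariant (SumRel ψ))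
  (hmin : ∀ a b c, a < b → b < c → ψ a b ≠ ψ a c)

include hsum hmin

theorem min_pairs_add_ne {p q r : ℕ} (hpq : p < q) (hqr : q < r) : ψ p q + ψ p r ≠ ψ q r := by
  intro h
  have key : ∀ a b c, a < b → b < c → ψ a b + ψ a c = ψ b c := fun a b c hab hbc =>
    (hsum.comp_eq (strictMono_vec_three hpq hqr) (strictMono_vec_three hab hbc)
      ![0, 1, 0, 2, 1, 2]).mp h
  have hzero : ∀ a b c d, a < b → b < c → c < d → ψ a b = 0 := fun a b c d hab hbc hcd => by
    have := key a b c hab hbc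
    have := key a b d hab (hbc.trans hcd)
    have := key a c d (hab.trans hbc) hcd
    have := key b c d hbc hcd
    omega
  exact hmin 0 1 2 zero_lt_one one_lt_two
    ((hzero 0 1 2 3 (by omega) (by omega) (by omega)).trans
      (hzero 0 2 3 4 (by omega) (by omega) (by omega)).symm)

theorem max_pairs_add_ne {p q r : ℕ} (hpq : p < q) (hqr : q < r) : ψ p r + ψ q r ≠ ψ p q := by
  intro h
  have key : ∀ a b c, a < b → b < c → ψ a c + ψ b c = ψ a b := fun a b c hab hbc =>
    (hsum.comp_eq (strictMono_vec_three hpq hqr) (strictMono_vec_three hab hbc)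
      ![0, 2, 1, 2, 0, 1]).mp h
  have hzero : ∀ a b c d, a < b → b < c → c < d → ψ c d = 0 := fun a b c d hab hbc hcd => by
    have := key a b c hab hbc
    have := key a b d hab (hbc.trans hcd)
    have := key a c d (hab.trans hbc) hcd
    have := key b c d hbc hcd
    omega
  exact hmin 2 3 4 (by omega) (by omega)
    ((hzero 0 1 2 3 (by omega) (by omega) (by omega)).trans
      (hzero 0 1 2 4 (by omega) (by omega) (by omega)).symm)

variable (hmax : ∀ a b c, a < b → b < c → ψ a c ≠ ψ b c)

include hmax

theorem exists_ne_eq_of_sumRel {u : Fin 6 → ℕ} (h₁ : u 0 < u 1) (h₂ : u 2 < u 3)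
    (h₃ : u 4 < u 5) (hu : SumRel ψ u) (i : Fin 6) : ∃ j ≠ i, u j = u i := by
  by_contra! hi
  -- moving the unshared value `u i` changes exactly one term of the relation
  have hv : SumRel ψ (fun j => 2 * u j) := (hsum _ _ fun j k => by omega).mp hu
  have hw : SumRel ψ (fun j => 2 * u j + if j = i then 1 else 0) := by
    refine (hsum _ _ fun j k => ?_).mp hu
    by_cases hj : j = i <;> by_cases hk : k = i
    · simp [hj, hk]
    · have := hi k hk
      simp [hj, hk]
      omega
    · have := hi j hj
      simp [hj, hk]
      omega
    · simp [hj, hk]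
  have := hmax (2 * u 0) (2 * u 0 + 1) (2 * u 1) (by omega) (by omega)
  have := hmin (2 * u 0) (2 * u 1) (2 * u 1 + 1) (by omega) (by omega)
  have := hmax (2 * u 2) (2 * u 2 + 1) (2 * u 3) (by omega) (by omega)
  have := hmin (2 * u 2) (2 * u 3) (2 * u 3 + 1) (by omega) (by omega)
  have := hmax (2 * u 4) (2 * u 4 + 1) (2 * u 5) (by omega) (by omega)
  have := hmin (2 * u 4) (2 * u 5) (2 * u 5 + 1) (by omega) (by omega)
  unfold SumRel at hv hw
  fin_cases i <;>
    simp only [Fin.isValue, Fin.zero_eta, Fin.mk_one, Fin.reduceFinMk, Fin.reduceEq, ↓reduceIte,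
      one_ne_zero, zero_ne_one, add_zero] at hv hw <;>
    omega

theorem adjacent_of_add_eq {a₁ b₁ a₂ b₂ a₃ b₃ : ℕ} (h₁ : a₁ < b₁) (h₂ : a₂ < b₂)
    (h₃ : a₃ < b₃) (hpos : 0 < ψ a₁ b₁) (h : ψ a₁ b₁ + ψ a₂ b₂ = ψ a₃ b₃) :
    b₁ = a₂ ∨ b₂ = a₁ := by
  have h₂₃ : ¬(a₂ = a₃ ∧ b₂ = b₃) := by
    rintro ⟨rfl, rfl⟩
    omega
  obtain h' | h' | ⟨rfl, rfl, rfl⟩ | ⟨rfl, rfl, rfl⟩ | ⟨rfl, rfl, rfl⟩ | ⟨rfl, rfl, rfl⟩ :=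
    adjacent_or_triangle h₁ h₂ h₃ h₂₃
      (exists_ne_eq_of_sumRel (u := ![a₁, b₁, a₂, b₂, a₃, b₃]) hsum hmin hmax h₁ h₂ h₃ h)
  · exact .inl h'
  · exact .inr h'
  · exact absurd h (min_pairs_add_ne hsum hmin h₁ h₃)
  · exact absurd ((add_comm _ _).trans h) (min_pairs_add_ne hsum hmin h₂ h₃)
  · exact absurd h (max_pairs_add_ne hsum hmin h₃ h₂)
  · exact absurd ((add_comm _ _).trans h) (max_pairs_add_ne hsum hmin h₃ h₁)

theorem inHindman_pairValues_univ : InHindman (pairValues ψ Set.univ) := by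
  intro B hB hsub
  have hpair : ∀ s ∈ FS B, ∃ a b, a < b ∧ ψ a b = s := fun s hs => by
    obtain ⟨a, -, b, -, hab, rfl⟩ := hsub hs
    exact ⟨a, b, hab, rfl⟩
  obtain ⟨x, hx, hx0⟩ := hB.exists_gt 0
  obtain ⟨y, hy, hxy⟩ := hB.exists_gt x
  obtain ⟨z, hz, hyz⟩ := hB.exists_gt y
  obtain ⟨a₁, b₁, h₁, rfl⟩ := hpair x (mem_FS_of_mem_s17 hx)
  obtain ⟨a₂, b₂, h₂, rfl⟩ := hpair y (mem_FS_of_mem_s17 hy)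
  obtain ⟨a₃, b₃, h₃, rfl⟩ := hpair z (mem_FS_of_mem_s17 hz)
  obtain ⟨c₁, d₁, k₁, hk₁⟩ := hpair _ (add_mem_FS_s17 hx hy hxy.ne)
  obtain ⟨c₂, d₂, k₂, hk₂⟩ := hpair _ (add_mem_FS_s17 hx hz (hxy.trans hyz).ne)
  obtain ⟨c₃, d₃, k₃, hk₃⟩ := hpair _ (add_mem_FS_s17 hy hz hyz.ne)
  have := adjacent_of_add_eq hsum hmin hmax h₁ h₂ k₁ hx0 hk₁.symm
  have := adjacent_of_add_eq hsum hmin hmax h₁ h₃ k₂ hx0 hk₂.symm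
  have := adjacent_of_add_eq hsum hmin hmax h₂ h₃ k₃ (hx0.trans hxy) hk₃.symm
  omega

end SemiInjective

theorem pairValues_image_subset {φ : ℕ → ℕ → ℕ} {e : ℕ → ℕ} (he : StrictMono e) (S : Set ℕ) :
    pairValues φ (e '' S) ⊆ pairValues (fun a b => φ (e a) (e b)) S := by
  rintro _ ⟨_, ⟨a, ha, rfl⟩, _, ⟨b, hb, rfl⟩, hab, rfl⟩
  exact ⟨a, ha, b, hb, he.lt_iff_lt.1 hab, rfl⟩

theorem pairValues_subset_image {φ : ℕ → ℕ → ℕ} {g : ℕ → ℕ}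
    (hg : ∀ a b, a < b → φ a b = g a ∨ φ a b = g b) (S : Set ℕ) : pairValues φ S ⊆ g '' S := by
  rintro _ ⟨a, ha, b, hb, hab, rfl⟩
  rcases hg a b hab with h | h
  exacts [⟨a, ha, h.symm⟩, ⟨b, hb, h.symm⟩]

theorem image_pairsOf_subset (f : Sym2 ℕ → ℕ) (H : Set ℕ) :
    f '' pairsOf H ⊆ pairValues (fun a b => f (Sym2.mk a b)) H := by
  rintro _ ⟨_, ⟨a, b, hab, ha, hb, rfl⟩, rfl⟩
  rcases hab.lt_or_gt with h | h
  · exact ⟨a, ha, b, hb, h, rfl⟩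
  · exact ⟨b, hb, a, ha, h, congrArg f Sym2.eq_swap⟩

theorem exists_infinite_inHindman_pairValues (φ : ℕ → ℕ → ℕ) :
    ∃ S : Set ℕ, S.Infinite ∧ InHindman (pairValues φ S) := by
  obtain ⟨e, he, hc⟩ := exists_strictMono_orderInvariant fun u : Fin 6 → ℕ =>
    (SumRel φ u, φ (u 0) (u 1) = φ (u 2) (u 3))
  let ψ a b := φ (e a) (e b)
  suffices ∃ S : Set ℕ, S.Infinite ∧ InHindman (pairValues ψ S) by
    obtain ⟨S, hS, hψ⟩ := this
    exact ⟨e '' S, hS.image he.injective.injOn, hψ.mono (pairValues_image_subset he S)⟩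
  have hsum : OrderInvariant (SumRel ψ) := fun u v h => congrArg Prod.fst (hc u v h)
  have heq : OrderInvariant fun u : Fin 6 → ℕ => ψ (u 0) (u 1) = ψ (u 2) (u 3) :=
    fun u v h => congrArg Prod.snd (hc u v h)
  have hmin : ∀ a b c, a < b → b < c → (ψ a b = ψ a c) = (ψ 0 1 = ψ 0 2) :=
    fun a b c hab hbc => heq.comp_eq (strictMono_vec_three hab hbc)
      (strictMono_vec_three zero_lt_one one_lt_two) ![0, 1, 0, 2, 0, 0]
  have hmax : ∀ a b c, a < b → b < c → (ψ a c = ψ b c) = (ψ 0 2 = ψ 1 2) :=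
    fun a b c hab hbc => heq.comp_eq (strictMono_vec_three hab hbc)
      (strictMono_vec_three zero_lt_one one_lt_two) ![0, 2, 1, 2, 0, 0]
  by_cases h₀ : ψ 0 1 = ψ 0 2
  · obtain ⟨S, hS, hg⟩ := exists_infinite_inHindman_image fun a => ψ a (a + 1)
    refine ⟨S, hS, hg.mono (pairValues_subset_image (fun a b hab => .inl ?_) S)⟩
    rcases (Nat.succ_le_of_lt hab).eq_or_lt with rfl | h
    · rfl
    · exact ((hmin a (a + 1) b a.lt_succ_self h).mpr h₀).symm
  by_cases h₁ : ψ 0 2 = ψ 1 2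
  · obtain ⟨S, hS, hg⟩ := exists_infinite_inHindman_image fun b => ψ 0 b
    refine ⟨S, hS, hg.mono (pairValues_subset_image (fun a b hab => .inr ?_) S)⟩
    rcases Nat.eq_zero_or_pos a with rfl | ha
    · rfl
    · exact ((hmax 0 a b ha hab).mpr h₁).symm
  exact ⟨Set.univ, Set.infinite_univ, inHindman_pairValues_univ hsum
    (fun a b c hab hbc h => h₀ ((hmin a b c hab hbc).mp h))
    (fun a b c hab hbc h => h₁ ((hmax a b c hab hbc).mp h))⟩

theorem hindman_not_katetov_below_ramsey :
    ¬ ∃ f : Sym2 ℕ → ℕ, ∀ A : Set ℕ, InHindman A → InRamsey (f ⁻¹' A) := by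
  rintro ⟨f, hf⟩
  obtain ⟨H, hH, hHind⟩ := exists_infinite_inHindman_pairValues fun a b => f (Sym2.mk a b)
  exact hf _ (hHind.mono (image_pairsOf_subset f H)) H hH (Set.subset_preimage_image f _)
end
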